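/- arXiv:2007.15552 — 2 statements merged into one kernel-verified Lean document; each statement's English description precedes it below -/
import Mathlib

section
/- Assume S is a finite regular semigroup generated by the finite alphabet A. Let T^1 = KR_right(S,A)^1 and φ: T^1 → S^1 the canonical surjective homomorphism. For t, t' ∈ T^1, φ(t) <_J φ(t') if and only if t <_J t'. -/
open scoped Classical

namespace KRHolonomy

/-- Green's quasi-order `≤_J` on a monoid: `a ≤_J b` iff `a ∈ M b M`. -/
def leJ {M : Type*} [Monoid M] (a b : M) : Prop := ∃ x y : M, a = x * b * y

/-- `a <_J b` iff `a ≤_J b` and not `b ≤_J a`. -/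
def ltJ {M : Type*} [Monoid M] (a b : M) : Prop := leJ a b ∧ ¬ leJ b a

/-- Green's quasi-order `≤_R` on a monoid: `a ≤_R b` iff `a ∈ b M`. -/
def leR {M : Type*} [Monoid M] (a b : M) : Prop := ∃ x : M, a = b * x

/-- `a <_R b` iff `a ≤_R b` and not `b ≤_R a`. -/
def ltR {M : Type*} [Monoid M] (a b : M) : Prop := leR a b ∧ ¬ leR b a

/-- Green's quasi-order `≤_L` on a monoid: `a ≤_L b` iff `a ∈ M b`. -/
def leL {M : Type*} [Monoid M] (a b : M) : Prop := ∃ x : M, a = x * b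

/-- `a <_L b` iff `a ≤_L b` and not `b ≤_L a`. -/
def ltL {M : Type*} [Monoid M] (a b : M) : Prop := leL a b ∧ ¬ leL b a

/-- The Dedekind height function: `height x` is the largest `k` such that there is a chain
`x₀ >_J x₁ >_J ⋯ >_J x_k = x`. -/
noncomputable def height {M : Type*} [Monoid M] (x : M) : ℕ :=
  sSup {k | ∃ c : ℕ → M, c k = x ∧ ∀ i < k, ltJ (c (i + 1)) (c i)}

variable {A S : Type*} [Semigroup S]

/-- The edge `(s, a, s·θ(a))` of the right Cayley graph of `(S,A)` is a transition edge:
there is no path in the right Cayley graph from `s·θ(a)` back to `s`. -/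
def IsTransitionEdge (θ : FreeMonoid A →* WithOne S) (s : WithOne S) (a : A) : Prop :=
  ¬ ∃ w : FreeMonoid A, s * θ (FreeMonoid.of a) * θ w = s

/-- The (ordered) sequence of transition edges along the path of the right Cayley graph
starting at `s` and reading the word `u`; an edge is recorded as a pair (source, label). -/
noncomputable def transEdgesFrom (θ : FreeMonoid A →* WithOne S) :
    WithOne S → List A → List (WithOne S × A)
  | _, [] => []
  | s, a :: w =>
      (if IsTransitionEdge θ s a then [(s, a)] else []) ++
        transEdgesFrom θ (s * θ (FreeMonoid.of a)) w

/-- The sequence of transition edges of the path starting at `1` reading `u`. -/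
noncomputable def transEdges (θ : FreeMonoid A →* WithOne S) (u : FreeMonoid A) :
    List (WithOne S × A) :=
  transEdgesFrom θ 1 (FreeMonoid.toList u)

/-- The congruence (`τ_r`, together with `(1,1)`) defining the right Karnofsky–Rhodes
expansion: two words of `A^*` represent the same element of `KR_right(S,A)¹` iff they are
both empty or both nonempty, they have the same image in `S¹` and the same sequence of
transition edges. -/
def KRrel (θ : FreeMonoid A →* WithOne S) (u v : FreeMonoid A) : Prop :=
  (u = 1 ∧ v = 1) ∨
    (u ≠ 1 ∧ v ≠ 1 ∧ θ u = θ v ∧ transEdges θ u = transEdges θ v)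

/-- Green's quasi-order `≤_J` on `T¹ = KR_right(S,A)¹`, expressed on word representatives:
`u ≤_J v` iff `u = p v q` holds in `T¹` for some `p, q ∈ T¹`. -/
def leJT (θ : FreeMonoid A →* WithOne S) (u v : FreeMonoid A) : Prop :=
  ∃ p q : FreeMonoid A, KRrel θ u (p * v * q)

/-- `<_J` on `T¹ = KR_right(S,A)¹`, expressed on word representatives. -/
def ltJT (θ : FreeMonoid A →* WithOne S) (u v : FreeMonoid A) : Prop :=
  leJT θ u v ∧ ¬ leJT θ v u

/-- The Dedekind height function on `T¹ = KR_right(S,A)¹`, expressed on word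
representatives: the largest `k` such that there is a chain
`t₀ >_J t₁ >_J ⋯ >_J t_k = t` in `T¹`. -/
noncomputable def heightT (θ : FreeMonoid A →* WithOne S) (u : FreeMonoid A) : ℕ :=
  sSup {k | ∃ c : ℕ → FreeMonoid A, KRrel θ (c k) u ∧ ∀ i < k, ltJT θ (c (i + 1)) (c i)}

/-- `ℓ = 2 · max { h(s) : s ∈ S¹ }`. -/
noncomputable def ell (S : Type*) [Semigroup S] : ℕ :=
  2 * sSup (Set.range fun s : WithOne S => height s)

/-- `ξ(u,v)`: the largest `i` (with `0 ≤ i ≤ m`, `m` the number of transition edges of `u`)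
such that the first `i` transition edges of `u` and of `v` agree. -/
noncomputable def xi (θ : FreeMonoid A →* WithOne S) (u v : FreeMonoid A) : ℕ :=
  sSup {i | i ≤ (transEdges θ u).length ∧
    (transEdges θ u).take i = (transEdges θ v).take i}

/-- The endpoint of an edge `(s, a)` of the right Cayley graph, namely `s·θ(a)`. -/
def edgeEnd (θ : FreeMonoid A →* WithOne S) (e : WithOne S × A) : WithOne S :=
  e.1 * θ (FreeMonoid.of e.2)

/-- The Lyndon–Chiswell length function `D` on `T¹ = KR_right(S,A)¹`, expressed on word
representatives.  With `k = ξ(u,v)` (and indexing the transition edges from `1` as in the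
paper, so that `E_k` sits at list index `k-1`):
`D(u,v) = ℓ` if `u = v` in `T¹`; `D(u,v) = 0` if `u ≠ v` in `T¹` and `k = 0`;
`D(u,v) = 2·h(end(E_k))` if `k > 0`, `E_{k+1}` and `E'_{k+1}` both exist and have the same
endpoint; and `D(u,v) = 2·h(end(E_k)) - 1` in all remaining cases. -/
noncomputable def lcD (θ : FreeMonoid A →* WithOne S) (u v : FreeMonoid A) : ℕ :=
  if KRrel θ u v then ell S
  else if xi θ u v = 0 then 0
  else
    let k := xi θ u v
    let base := (transEdges θ u)[k - 1]?.elim 0 fun e => height (edgeEnd θ e)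
    if ∃ e e', (transEdges θ u)[k]? = some e ∧ (transEdges θ v)[k]? = some e' ∧
        edgeEnd θ e = edgeEnd θ e'
    then 2 * base
    else 2 * base - 1

/-- The relation `∼` on `C = {(k,α) : 0 ≤ k ≤ ℓ, α ∈ T¹}`:
`(k,α) ∼ (k',β)` iff `k = k'` and `D(α,β) ≥ k`. -/
def simRel (θ : FreeMonoid A →* WithOne S)
    (p q : {p : ℕ × FreeMonoid A // p.1 ≤ ell S}) : Prop :=
  p.val.1 = q.val.1 ∧ lcD θ p.val.2 q.val.2 ≥ p.val.1

/-- The vertex set of the Chiswell tree: `∼`-classes `[k,α]`. -/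
def CVert (θ : FreeMonoid A →* WithOne S) : Type _ := Quot (simRel θ)

/-- The edge relation of the Chiswell graph: the edges are `[k,α] — [k+1,α]`
for `0 ≤ k < ℓ` and `α ∈ T¹`. -/
def edgeRel (θ : FreeMonoid A →* WithOne S) (v w : CVert θ) : Prop :=
  ∃ (k : ℕ) (α : FreeMonoid A) (hk : k + 1 ≤ ell S),
    v = Quot.mk (simRel θ) ⟨(k, α), Nat.le_of_succ_le hk⟩ ∧
    w = Quot.mk (simRel θ) ⟨(k + 1, α), hk⟩

/-- The Chiswell graph `𝒞`. -/
def CGraph (θ : FreeMonoid A →* WithOne S) : SimpleGraph (CVert θ) :=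
  SimpleGraph.fromRel (edgeRel θ)

/-- The depth function of the Chiswell tree: `δ([k,α]) = k`. -/
def depth (θ : FreeMonoid A →* WithOne S) : CVert θ → ℕ :=
  Quot.lift (fun p => p.val.1) (fun _ _ h => h.1)

end KRHolonomy

namespace KRHolonomy

section Aux

variable {A S : Type*} [Semigroup S]

lemma withOne_mul_eq_one {a b : WithOne S} (h : a * b = 1) : a = 1 ∧ b = 1 := by
  rcases eq_or_ne a 1 with rfl | ha
  · exact ⟨rfl, by simpa using h⟩
  · obtain ⟨x, rfl⟩ := WithOne.ne_one_iff_exists.mp ha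
    rcases eq_or_ne b 1 with rfl | hb
    · simp at h
    · obtain ⟨y, rfl⟩ := WithOne.ne_one_iff_exists.mp hb
      rw [← WithOne.coe_mul] at h
      exact absurd h WithOne.coe_ne_one

lemma transEdgesFrom_append (θ : FreeMonoid A →* WithOne S) (l₁ l₂ : List A) (s : WithOne S) :
    transEdgesFrom θ s (l₁ ++ l₂) =
      transEdgesFrom θ s l₁ ++ transEdgesFrom θ (s * θ (FreeMonoid.ofList l₁)) l₂ := by
  induction l₁ generalizing s with
  | nil => simp [transEdgesFrom, FreeMonoid.ofList_nil]
  | cons a l ih =>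
      simp only [List.cons_append, transEdgesFrom, List.append_eq, ih, FreeMonoid.ofList_cons,
        map_mul, List.append_assoc, mul_assoc]

lemma transEdgesFrom_eq_nil (θ : FreeMonoid A →* WithOne S) (l : List A) (s : WithOne S)
    (h : ∃ w : FreeMonoid A, s * θ (FreeMonoid.ofList l) * θ w = s) :
    transEdgesFrom θ s l = [] := by
  induction l generalizing s with
  | nil => rfl
  | cons a l ih =>
      obtain ⟨w, hw⟩ := h
      simp only [FreeMonoid.ofList_cons, map_mul, mul_assoc] at hw
      have hnt : ¬ IsTransitionEdge θ s a := by
        intro hT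
        exact hT ⟨FreeMonoid.ofList l * w, by simpa [map_mul, mul_assoc] using hw⟩
      have hrec : transEdgesFrom θ (s * θ (FreeMonoid.of a)) l = [] := by
        refine ih _ ⟨w * FreeMonoid.of a, ?_⟩
        have := congrArg (· * θ (FreeMonoid.of a)) hw
        simpa [map_mul, mul_assoc] using this
      simp [transEdgesFrom, hnt, hrec]

lemma leJT_of_leJ (θ : FreeMonoid A →* WithOne S)
    (hgen : ∀ s : S, ∃ u : FreeMonoid A, θ u = (s : WithOne S))
    {u v : FreeMonoid A} (hreg : ∀ s : S, ∃ t : S, s * t * s = s)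
    (hu : θ u ≠ 1) (h : leJ (θ u) (θ v)) :
    leJT θ u v := by
  obtain ⟨x, y, hxy⟩ := h
  obtain ⟨s, hs⟩ := WithOne.ne_one_iff_exists.mp hu
  obtain ⟨t, ht⟩ := hreg s
  have hsurj : ∀ m : WithOne S, ∃ w : FreeMonoid A, θ w = m := by
    intro m
    rcases eq_or_ne m 1 with rfl | hm
    · exact ⟨1, map_one θ⟩
    · obtain ⟨s', hs'⟩ := WithOne.ne_one_iff_exists.mp hm
      obtain ⟨w, hw⟩ := hgen s'
      exact ⟨w, hw.trans hs'⟩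
  obtain ⟨z, hz⟩ := hsurj ((t : WithOne S) * x)
  obtain ⟨q, hq⟩ := hsurj y
  have hts : (s : WithOne S) * ((t : WithOne S) * (s : WithOne S)) = s := by
    rw [← mul_assoc, ← WithOne.coe_mul, ← WithOne.coe_mul, ht]
  have key : θ u * (θ z * (θ v * θ q)) = θ u := by
    rw [hz, hq, ← hs]
    calc (s : WithOne S) * (((t : WithOne S) * x) * (θ v * y))
        = (s : WithOne S) * ((t : WithOne S) * (x * θ v * y)) := by
          simp only [mul_assoc]
      _ = (s : WithOne S) * ((t : WithOne S) * θ u) := by rw [← hxy]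
      _ = (s : WithOne S) * ((t : WithOne S) * (s : WithOne S)) := by rw [← hs]
      _ = (s : WithOne S) := hts
  have hθ : θ (u * z * v * q) = θ u := by
    simp only [map_mul, mul_assoc]
    exact key
  refine ⟨u * z, q, Or.inr ⟨?_, ?_, hθ.symm, ?_⟩⟩
  · intro h0
    exact hu (h0 ▸ map_one θ)
  · intro h0
    rw [h0, map_one] at hθ
    exact hu hθ.symm
  · have h1 : u * z * v * q = u * (z * (v * q)) := by
      simp only [mul_assoc]
    rw [h1]
    unfold transEdges
    rw [FreeMonoid.toList_mul, transEdgesFrom_append, FreeMonoid.ofList_toList, one_mul]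
    have hnil : transEdgesFrom θ (θ u) (FreeMonoid.toList (z * (v * q))) = [] := by
      refine transEdgesFrom_eq_nil θ _ _ ⟨1, ?_⟩
      rw [FreeMonoid.ofList_toList, map_one, mul_one]
      simpa [map_mul, mul_assoc] using key
    rw [hnil, List.append_nil]

end Aux

end KRHolonomy

open KRHolonomy in
/-- Let `S` be a finite regular semigroup generated by `A`,
`T¹ = KR_right(S,A)¹`, and `φ : T¹ → S¹` the canonical surmorphism.  For `t, t' ∈ T¹`,
`φ(t) <_J φ(t')` if and only if `t <_J t'`.  On word representatives. -/
theorem kr_ltJ_iff_ltJ {A S : Type*} [Finite A] [Semigroup S] [Finite S]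
    (θ : FreeMonoid A →* WithOne S)
    (hgen : ∀ s : S, ∃ u : FreeMonoid A, θ u = (s : WithOne S))
    (hproper : ∀ u : FreeMonoid A, θ u = 1 → u = 1)
    (hreg : ∀ s : S, ∃ t : S, s * t * s = s)
    (u v : FreeMonoid A) :
    ltJ (θ u) (θ v) ↔ ltJT θ u v := by
  have hext : ∀ w₁ w₂ : FreeMonoid A, KRrel θ w₁ w₂ → θ w₁ = θ w₂ := by
    intro w₁ w₂ h
    rcases h with ⟨h1, h2⟩ | ⟨_, _, h, _⟩
    · rw [h1, h2]
    · exact h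
  constructor
  · rintro ⟨hle, hnle⟩
    have hu : θ u ≠ 1 := by
      intro h1
      exact hnle ⟨θ v, 1, by rw [h1, mul_one, mul_one]⟩
    refine ⟨leJT_of_leJ θ hgen hreg hu hle, ?_⟩
    rintro ⟨p, q, hk⟩
    exact hnle ⟨θ p, θ q, by rw [hext _ _ hk]; simp [map_mul, mul_assoc]⟩
  · rintro ⟨⟨p, q, hk⟩, hnle⟩
    refine ⟨⟨θ p, θ q, by rw [hext _ _ hk]; simp [map_mul, mul_assoc]⟩, ?_⟩
    rintro ⟨x, y, hxy⟩
    rcases eq_or_ne (θ v) 1 with hv1 | hv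
    · have h1 : x * θ u * y = 1 := by rw [← hxy, hv1]
      have hu1 : θ u = 1 := (withOne_mul_eq_one (withOne_mul_eq_one h1).1).2
      have hu0 : u = 1 := hproper u hu1
      have hv0 : v = 1 := hproper v hv1
      exact hnle ⟨1, 1, Or.inl ⟨hv0, by rw [hu0]; simp⟩⟩
    · exact hnle (leJT_of_leJ θ hgen hreg hv ⟨x, y, hxy⟩)
end

section
/- Let T^1 = KR_right(S,A)^1 for a finite semigroup S generated by a finite alphabet A, and let D be the Lyndon–Chiswell length function on T^1. For all α, β, γ ∈ T^1, if α ≠ β and ξ(α,β) < ξ(α,γ), then D(α,β) < D(α,γ). -/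
open scoped Classical

namespace KRHolonomy

variable {A S : Type*} [Semigroup S]

/-!
Along any word, the endpoints of the successive transition edges descend strictly in the
`J`-order: a transition edge `s → s·a` is a strict `R`-descent (no path returns, and `θ` is onto
`S¹`), between two transition edges the path only moves `R`-downwards, and in a finite monoid a
strict `R`-descent is a strict `J`-descent. Hence the heights `h(end Eᵢ)` strictly increase and
are positive. For `k = ξ(α,β) < k' = ξ(α,γ)` this gives
`D(α,β) ≤ 2 h(end E_k) ≤ 2 h(end E_k') - 2 < D(α,γ)`,
and `D(α,β) = 0 < D(α,γ)` when `k = 0`.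
-/

section Green

variable {M : Type*} [Monoid M]

lemma leJ_refl (a : M) : leJ a a := ⟨1, 1, by simp⟩

lemma leJ_trans {a b c : M} (hab : leJ a b) (hbc : leJ b c) : leJ a c := by
  obtain ⟨x, y, rfl⟩ := hab
  obtain ⟨x', y', rfl⟩ := hbc
  exact ⟨x * x', y' * y, by simp only [mul_assoc]⟩

lemma ltJ_irrefl (a : M) : ¬ ltJ a a := fun h => h.2 (leJ_refl a)

lemma ltJ_trans {a b c : M} (hab : ltJ a b) (hbc : ltJ b c) : ltJ a c :=
  ⟨leJ_trans hab.1 hbc.1, fun hca => hbc.2 (leJ_trans hca hab.1)⟩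

lemma leR_trans {a b c : M} (hab : leR a b) (hbc : leR b c) : leR a c := by
  obtain ⟨x, rfl⟩ := hab
  obtain ⟨y, rfl⟩ := hbc
  exact ⟨y * x, mul_assoc _ _ _⟩

lemma ltR_of_ltR_of_leR {a b c : M} (hab : ltR a b) (hbc : leR b c) : ltR a c :=
  ⟨leR_trans hab.1 hbc, fun hca => hab.2 (leR_trans hbc hca)⟩

lemma leJ_of_leR {a b : M} (h : leR a b) : leJ a b := by
  obtain ⟨x, rfl⟩ := h
  exact ⟨1, x, by rw [one_mul]⟩

lemma eq_pow_mul_mul_pow {p b c : M} (h : b = p * b * c) (n : ℕ) : b = p ^ n * b * c ^ n := by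
  induction n with
  | zero => simp
  | succ n ih =>
    calc b = p * (p ^ n * b * c ^ n) * c := by rw [← ih, ← h]
    _ = p ^ (n + 1) * b * c ^ (n + 1) := by rw [pow_succ' p, pow_succ c]; simp only [mul_assoc]

/-- Stability of finite monoids. Writing `a = b x` and `b = p a q`, we get `b = pⁱ b cⁱ` for
`c = x q` and all `i`; a repetition `cⁱ = cⁱ⁺ᵈ⁺¹` among the powers of `c` then gives
`b = b cᵈ⁺¹ ∈ a M`. -/
lemma ltJ_of_ltR [Finite M] {a b : M} (h : ltR a b) : ltJ a b := by
  obtain ⟨⟨x, rfl⟩, hnot⟩ := h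
  refine ⟨leJ_of_leR ⟨x, rfl⟩, fun ⟨p, q, hb⟩ => hnot ?_⟩
  have hpow := eq_pow_mul_mul_pow (p := p) (c := x * q) (hb.trans (by simp only [mul_assoc]))
  obtain ⟨i, j, hij, hc⟩ := Finite.exists_ne_map_eq_of_infinite fun n : ℕ => (x * q) ^ n
  wlog hlt : i < j generalizing i j
  · exact this j i hij.symm hc.symm (by omega)
  obtain ⟨d, rfl⟩ := Nat.exists_eq_add_of_lt hlt
  have hper : b = b * (x * q) ^ (d + 1) :=
    calc b = p ^ i * b * (x * q) ^ (i + d + 1) := (hpow i).trans (congrArg _ hc)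
    _ = b * (x * q) ^ (d + 1) := by rw [add_assoc, pow_add, ← mul_assoc, ← hpow i]
  exact ⟨q * (x * q) ^ d, hper.trans (by rw [pow_succ']; simp only [mul_assoc])⟩

lemma ltJ_of_chain {c : ℕ → M} {k : ℕ} (hc : ∀ i < k, ltJ (c (i + 1)) (c i)) {i j : ℕ}
    (hij : i < j) (hjk : j ≤ k) : ltJ (c j) (c i) := by
  induction j, hij using Nat.le_induction with
  | base => exact hc i hjk
  | succ j hij ih => exact ltJ_trans (hc j hjk) (ih (by omega))

lemma chain_length_lt_card [Finite M] {c : ℕ → M} {k : ℕ}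
    (hc : ∀ i < k, ltJ (c (i + 1)) (c i)) : k < Nat.card M := by
  have hinj : Function.Injective fun i : Fin (k + 1) => c i := by
    intro i j (hij : c i = c j)
    by_contra hne
    rcases lt_or_gt_of_ne (Fin.val_ne_of_ne hne) with hlt | hlt
    · exact ltJ_irrefl _ (hij ▸ ltJ_of_chain hc hlt (by omega))
    · exact ltJ_irrefl _ (hij ▸ ltJ_of_chain hc hlt (by omega))
  simpa using Nat.card_le_card_of_injective _ hinj

lemma height_lt_of_ltJ [Finite M] {x y : M} (h : ltJ x y) : height y < height x := by
  have hbdd (z : M) :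
      BddAbove {k | ∃ c : ℕ → M, c k = z ∧ ∀ i < k, ltJ (c (i + 1)) (c i)} :=
    ⟨Nat.card M, by rintro _ ⟨_, _, hc⟩; exact (chain_length_lt_card hc).le⟩
  obtain ⟨c, (hcy : c (height y) = y), hc⟩ :=
    Nat.sSup_mem (by exact ⟨0, fun _ => y, rfl, by simp⟩) (hbdd y)
  suffices height y + 1 ≤ height x by omega
  refine le_csSup (hbdd x) ⟨fun i => if i ≤ height y then c i else x, by simp, fun i hi => ?_⟩
  rcases Nat.lt_or_eq_of_le (Nat.lt_succ_iff.mp hi) with hi | rfl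
  · simpa [hi, hi.le, Nat.succ_le_of_lt hi] using hc i hi
  · simpa [hcy] using h

end Green

section Transitions

variable {θ : FreeMonoid A →* WithOne S}

instance [Finite S] : Finite (WithOne S) := inferInstanceAs (Finite (Option S))

lemma surjective_of_forall_coe (hgen : ∀ s : S, ∃ u : FreeMonoid A, θ u = (s : WithOne S)) :
    Function.Surjective θ :=
  WithOne.recOneCoe ⟨1, map_one θ⟩ hgen

lemma IsTransitionEdge.ltR_edgeEnd (hθ : Function.Surjective θ) {s : WithOne S} {a : A}
    (h : IsTransitionEdge θ s a) : ltR (edgeEnd θ (s, a)) s := by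
  refine ⟨⟨_, rfl⟩, fun ⟨z, hz⟩ => ?_⟩
  obtain ⟨w, rfl⟩ := hθ z
  exact h ⟨w, hz.symm⟩

lemma isTransitionEdge_and_leR_of_mem_transEdgesFrom {w : List A} {s : WithOne S}
    {e : WithOne S × A} (he : e ∈ transEdgesFrom θ s w) :
    IsTransitionEdge θ e.1 e.2 ∧ leR e.1 s := by
  induction w generalizing s with
  | nil => simp [transEdgesFrom] at he
  | cons a w ih =>
    rw [transEdgesFrom, List.mem_append] at he
    rcases he with he | he
    · split_ifs at he with ha
      · rw [List.mem_singleton.mp he]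
        exact ⟨ha, 1, (mul_one s).symm⟩
      · simp at he
    · obtain ⟨he, hle⟩ := ih he
      exact ⟨he, leR_trans hle ⟨_, rfl⟩⟩

lemma pairwise_transEdgesFrom (s : WithOne S) (w : List A) :
    (transEdgesFrom θ s w).Pairwise fun e f => leR f.1 (edgeEnd θ e) := by
  induction w generalizing s with
  | nil => simp [transEdgesFrom]
  | cons a w ih =>
    rw [transEdgesFrom, List.pairwise_append]
    refine ⟨by split_ifs <;> simp, ih _, fun e he f hf => ?_⟩
    split_ifs at he
    · rw [List.mem_singleton.mp he]
      exact (isTransitionEdge_and_leR_of_mem_transEdgesFrom hf).2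
    · simp at he

lemma height_source_lt_height_edgeEnd [Finite S] (hθ : Function.Surjective θ)
    {u : FreeMonoid A} {e : WithOne S × A} (he : e ∈ transEdges θ u) :
    height e.1 < height (edgeEnd θ e) :=
  height_lt_of_ltJ <| ltJ_of_ltR <|
    (isTransitionEdge_and_leR_of_mem_transEdgesFrom he).1.ltR_edgeEnd hθ

lemma pairwise_height_edgeEnd_lt [Finite S] (hθ : Function.Surjective θ) (u : FreeMonoid A) :
    (transEdges θ u).Pairwise fun e f => height (edgeEnd θ e) < height (edgeEnd θ f) := by
  refine (pairwise_transEdgesFrom 1 _).imp_of_mem fun _ hf hle => height_lt_of_ltJ ?_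
  exact ltJ_of_ltR <| ltR_of_ltR_of_leR
    ((isTransitionEdge_and_leR_of_mem_transEdgesFrom hf).1.ltR_edgeEnd hθ) hle

end Transitions

section LyndonChiswell

variable {θ : FreeMonoid A →* WithOne S} {u v : FreeMonoid A}

lemma xi_le_length : xi θ u v ≤ (transEdges θ u).length :=
  (Nat.sSup_mem (s := {i | i ≤ (transEdges θ u).length ∧
    (transEdges θ u).take i = (transEdges θ v).take i})
    ⟨0, by simp⟩ ⟨_, fun _ hi => hi.1⟩).1

lemma two_mul_height_le_ell [Finite S] (x : WithOne S) : 2 * height x ≤ ell S :=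
  Nat.mul_le_mul_left 2 (le_csSup (Set.finite_range _).bddAbove ⟨x, rfl⟩)

lemma lcD_eq_zero (hne : ¬ KRrel θ u v) (hxi : xi θ u v = 0) : lcD θ u v = 0 := by
  simp [lcD, hne, hxi]

lemma lcD_le (hne : ¬ KRrel θ u v) {e : WithOne S × A}
    (he : (transEdges θ u)[xi θ u v - 1]? = some e) :
    lcD θ u v ≤ 2 * height (edgeEnd θ e) := by
  simp only [lcD, hne, he, if_false, Option.elim_some]
  split_ifs <;> omega

lemma le_lcD [Finite S] (hxi : xi θ u v ≠ 0) {e : WithOne S × A}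
    (he : (transEdges θ u)[xi θ u v - 1]? = some e) :
    2 * height (edgeEnd θ e) - 1 ≤ lcD θ u v := by
  have := two_mul_height_le_ell (edgeEnd θ e)
  simp only [lcD, hxi, he, if_false, Option.elim_some]
  split_ifs <;> omega

end LyndonChiswell

end KRHolonomy

open KRHolonomy in
theorem lcD_lt_of_xi_lt_general {A S : Type*} [Semigroup S] [Finite S]
    (θ : FreeMonoid A →* WithOne S)
    (hgen : ∀ s : S, ∃ u : FreeMonoid A, θ u = (s : WithOne S))
    (α β γ : FreeMonoid A) (hne : ¬ KRrel θ α β) (hxi : xi θ α β < xi θ α γ) :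
    lcD θ α β < lcD θ α γ := by
  have hθ := surjective_of_forall_coe hgen
  have hγ : xi θ α γ - 1 < (transEdges θ α).length := by
    have := xi_le_length (θ := θ) (u := α) (v := γ)
    omega
  have hlow := le_lcD (by omega) (List.getElem?_eq_getElem hγ)
  have hpos := height_source_lt_height_edgeEnd hθ (List.getElem_mem hγ)
  rcases Nat.eq_zero_or_pos (xi θ α β) with hβ | hβ
  · rw [lcD_eq_zero hne hβ]
    omega
  · have hup := lcD_le hne (List.getElem?_eq_getElem (by omega : xi θ α β - 1 < _))
    have hlt := List.pairwise_iff_getElem.mp (pairwise_height_edgeEnd_lt hθ α)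
      (xi θ α β - 1) (xi θ α γ - 1) (by omega) hγ (by omega)
    omega

open KRHolonomy in
/-- For all `α, β, γ ∈ T¹ = KR_right(S,A)¹`, if `α ≠ β` (in `T¹`) and
`ξ(α,β) < ξ(α,γ)`, then `D(α,β) < D(α,γ)`. -/
theorem lcD_lt_of_xi_lt {A S : Type*} [Finite A] [Semigroup S] [Finite S]
    (θ : FreeMonoid A →* WithOne S)
    (hgen : ∀ s : S, ∃ u : FreeMonoid A, θ u = (s : WithOne S))
    (hproper : ∀ u : FreeMonoid A, θ u = 1 → u = 1)
    (α β γ : FreeMonoid A) (hne : ¬ KRrel θ α β) (hxi : xi θ α β < xi θ α γ) :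
    lcD θ α β < lcD θ α γ :=
  lcD_lt_of_xi_lt_general θ hgen α β γ hne hxi
end
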